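/- Let 𝒜 be a trim ℕ-automaton computing g : A* → ℕ that contains a heavy cycle on some state. Then g has exponential growth; in particular there exist words u, v, w with v nonempty such that g(u v^ℓ w) ≥ 2^ℓ for all ℓ ≥ 0. -/

import Mathlib

set_option autoImplicit false

/-! ### Asymptotic growth of functions `A* → ℕ` -/

/-- `g` has `k`-polynomial growth: `g(w) = O(|w|^k)` and there is an infinite set `L`
of words on which `g(w) = Ω(|w|^k)`. -/
def PolyGrowth {A : Type} (g : List A → ℕ) (k : ℕ) : Prop :=
  (∃ C : ℕ, ∀ w, g w ≤ C * w.length ^ k + C) ∧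
  (∃ L : Set (List A), L.Infinite ∧ ∃ c : ℕ, 0 < c ∧ ∀ w ∈ L, w.length ^ k ≤ c * g w)

/-- `g` has exponential growth: `g(w) = 2^{O(|w|)}` and there is an infinite set `L`
of words on which `g(w) = 2^{Ω(|w|)}`. -/
def ExpGrowth {A : Type} (g : List A → ℕ) : Prop :=
  (∃ C : ℕ, ∀ w, g w ≤ 2 ^ (C * w.length + C)) ∧
  (∃ L : Set (List A), L.Infinite ∧ ∃ c : ℕ, 0 < c ∧ ∀ w ∈ L, 2 ^ w.length ≤ (g w) ^ c)

/-! ### Substitutions -/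

/-- Extension of a substitution `s : X → (B ⊎ X)*` to a morphism on `(B ⊎ X)*`
fixing the letters of `B`; this also gives the composition of substitutions,
`(s₁ ∘ s₂) x = applySubst s₁ (s₂ x)`. -/
def applySubst {B X : Type} (s : X → List (B ⊕ X)) (l : List (B ⊕ X)) : List (B ⊕ X) :=
  l.flatMap (fun c => match c with | Sum.inl b => [Sum.inl b] | Sum.inr x => s x)

/-- Evaluation of a word over `B ⊎ X` under a valuation `v : X → B*` of the registers. -/
def evalSubst {B X : Type} (v : X → List B) (l : List (B ⊕ X)) : List B :=
  l.flatMap (fun c => match c with | Sum.inl b => [b] | Sum.inr x => v x)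

/-- Number of occurrences of register `x` in a word over `B ⊎ X`. -/
noncomputable def occCount {B X : Type} (x : X) (l : List (B ⊕ X)) : ℕ :=
  l.countP (fun c => @decide (c = Sum.inr x) (Classical.propDecidable _))

/-- Total number of occurrences of register `x` in the whole set of words `{s y | y ∈ X}`. -/
noncomputable def totalOcc {B X : Type} [Fintype X] (s : X → List (B ⊕ X)) (x : X) : ℕ :=
  ∑ y : X, occCount x (s y)

/-! ### Streaming string transducers -/

/-- A streaming string transducer (SST) with input alphabet `A` and output alphabet `B`:
finitely many states `Q` with initial state `q0`, finitely many registers `X` with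
initial contents `init`, a partial transition/update function (`trans`, returning the
successor state together with the register update substitution, with a common domain),
and a partial output function `out`. -/
structure SST (A B : Type) where
  Q : Type
  X : Type
  [finQ : Fintype Q]
  [finX : Fintype X]
  q0 : Q
  init : X → List B
  trans : Q → A → Option (Q × (X → List (B ⊕ X)))
  out : Q → Option (List (B ⊕ X))

attribute [instance] SST.finQ SST.finX

/-- Run of an SST from state `q` with current register valuation `v`. -/
def SST.runFrom {A B : Type} (T : SST A B) :
    T.Q → (T.X → List B) → List A → Option (T.Q × (T.X → List B))
  | q, v, [] => some (q, v)
  | q, v, a :: w =>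
    match T.trans q a with
    | none => none
    | some (q', s) => T.runFrom q' (fun x => evalSubst v (s x)) w

/-- The (partial) function computed by an SST. -/
def SST.eval {A B : Type} (T : SST A B) (w : List A) : Option (List B) :=
  (T.runFrom T.q0 T.init w).bind fun p => (T.out p.1).map fun o => evalSubst p.2 o

def SST.Computes {A B : Type} (T : SST A B) (f : List A → Option (List B)) : Prop :=
  ∀ w, T.eval w = f w

/-- An SST is copyless if every update substitution uses each register at most once
in total. -/
def SST.Copyless {A B : Type} (T : SST A B) : Prop :=
  ∀ q a p, T.trans q a = some p → ∀ x : T.X, totalOcc p.2 x ≤ 1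

/-- An SST is `k`-layered if its registers can be partitioned into layers
`X_0, …, X_k` such that every update of a register of layer `i` only uses registers
of layers `≤ i`, and each register of layer `i` is used at most once in total in the
updates of the registers of layer `i`. -/
def SST.IsLayered {A B : Type} (T : SST A B) (k : ℕ) : Prop :=
  ∃ layer : T.X → Fin (k + 1),
    ∀ q a p, T.trans q a = some p →
      (∀ x y, Sum.inr y ∈ p.2 x → layer y ≤ layer x) ∧
      (∀ y : T.X,
        (∑ x ∈ Finset.univ.filter (fun x => layer x = layer y), occCount y (p.2 x)) ≤ 1)

/-- The composed substitution `λ(q, w)` applied along the run reading `w` from state `q`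
(together with the state reached). -/
def SST.substFrom {A B : Type} (T : SST A B) :
    T.Q → List A → Option (T.Q × (T.X → List (B ⊕ T.X)))
  | q, [] => some (q, fun x => [Sum.inr x])
  | q, a :: w =>
    match T.trans q a with
    | none => none
    | some (q', s) => (T.substFrom q' w).map fun p => (p.1, fun x => applySubst s (p.2 x))

/-- An SST is `(k,B)`-bounded if its registers can be partitioned into layers
`X_0, …, X_k` such that every update of a register of layer `i` only uses registers of
layers `≤ i`, and for every state `q` and word `w`, each register of layer `i` occurs
at most `B` times in total in `{λ(q,w)(x) | x ∈ X_i}`. -/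
def SST.IsBounded {A B : Type} (T : SST A B) (k Bd : ℕ) : Prop :=
  ∃ layer : T.X → Fin (k + 1),
    (∀ q a p, T.trans q a = some p → ∀ x y, Sum.inr y ∈ p.2 x → layer y ≤ layer x) ∧
    (∀ q w p, T.substFrom q w = some p →
      ∀ y : T.X,
        (∑ x ∈ Finset.univ.filter (fun x => layer x = layer y), occCount y (p.2 x)) ≤ Bd)

/-! ### Simple SSTs -/

/-- A simple SST: total, a single state (hence no state component), and update
substitutions and output using no letters of `B`. -/
structure SimpleSST (A B : Type) where
  X : Type
  [finX : Fintype X]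
  [decX : DecidableEq X]
  init : X → List B
  upd : A → X → List X
  out : List X

attribute [instance] SimpleSST.finX SimpleSST.decX

/-- Register valuation of a simple SST after reading a word, starting from valuation `v`. -/
def SimpleSST.valFrom {A B : Type} (T : SimpleSST A B) :
    (T.X → List B) → List A → T.X → List B
  | v, [] => v
  | v, a :: w => T.valFrom (fun x => (T.upd a x).flatMap v) w

/-- Register valuation `𝒯^w` of a simple SST after reading `w`. -/
def SimpleSST.val {A B : Type} (T : SimpleSST A B) (w : List A) : T.X → List B :=
  T.valFrom T.init w

/-- The (total) function computed by a simple SST. -/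
def SimpleSST.eval {A B : Type} (T : SimpleSST A B) (w : List A) : List B :=
  (T.out).flatMap (T.val w)

/-! ### Two-way transducers -/

/-- A tape symbol: a letter of `A` or one of the two endmarkers `⊢`, `⊣`. -/
inductive TapeSym (A : Type) where
  | lend
  | rend
  | letter (a : A)

/-- The content of the tape `⊢w⊣` at position `m ∈ {0, …, |w|+1}`. -/
def tapeAt {A : Type} (w : List A) (m : ℕ) : TapeSym A :=
  if m = 0 then TapeSym.lend
  else
    match w[m - 1]? with
    | some a => TapeSym.letter a
    | none => TapeSym.rend

/-- Head moves. -/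
inductive Dir where
  | left
  | right

/-- A deterministic two-way transducer: finitely many states with an initial state and
a set of final states, and a partial transition/output function (common domain). -/
structure TwoWayT (A B : Type) where
  Q : Type
  [finQ : Fintype Q]
  q0 : Q
  final : Set Q
  trans : Q → TapeSym A → Option ((Q × Dir) × List B)

attribute [instance] TwoWayT.finQ

/-- `TwoWayT.Steps T w c v c'`: on input `⊢w⊣` the transducer can go from
configuration `c` to configuration `c'` producing output `v`. -/
inductive TwoWayT.Steps {A B : Type} (T : TwoWayT A B) (w : List A) :
    T.Q × ℕ → List B → T.Q × ℕ → Prop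
  | refl (c : T.Q × ℕ) : TwoWayT.Steps T w c [] c
  | stepL {q : T.Q} {m : ℕ} {q' : T.Q} {v u : List B} {cf : T.Q × ℕ} :
      T.trans q (tapeAt w m) = some ((q', Dir.left), v) → 1 ≤ m →
      TwoWayT.Steps T w (q', m - 1) u cf → TwoWayT.Steps T w (q, m) (v ++ u) cf
  | stepR {q : T.Q} {m : ℕ} {q' : T.Q} {v u : List B} {cf : T.Q × ℕ} :
      T.trans q (tapeAt w m) = some ((q', Dir.right), v) → m ≤ w.length →
      TwoWayT.Steps T w (q', m + 1) u cf → TwoWayT.Steps T w (q, m) (v ++ u) cf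

/-- The two-way transducer computes the partial function `f`: `f w = some v` iff there
is an accepting run on `⊢w⊣` (from `(q0, 0)` to `(q, |w|+1)` with `q` final)
producing `v`. -/
def TwoWayT.Computes {A B : Type} (T : TwoWayT A B) (f : List A → Option (List B)) : Prop :=
  ∀ w v, f w = some v ↔ ∃ q ∈ T.final, TwoWayT.Steps T w (T.q0, 0) v (q, w.length + 1)

/-! ### Marble transducers -/

/-- Actions of a marble transducer: move left, move right, lift the marble, or drop a
marble of color `c`. -/
inductive MAct (C : Type) where
  | left
  | right
  | lift
  | drop (c : C)

/-- A deterministic marble transducer: finitely many states with an initial state and a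
set of final states, finitely many marble colors `C`, and a partial transition/output
function (common domain) reading the current state, the tape symbol, and the color of
the marble at the current position (if any); on a position carrying a marble the head
may only move left or lift the marble. -/
structure MarbleT (A B : Type) where
  Q : Type
  C : Type
  [finQ : Fintype Q]
  [finC : Fintype C]
  q0 : Q
  final : Set Q
  trans : Q → TapeSym A → Option C → Option ((Q × MAct C) × List B)
  marble_left_or_lift : ∀ q s c p, trans q s (some c) = some p →
    p.1.2 = MAct.left ∨ p.1.2 = MAct.lift

attribute [instance] MarbleT.finQ MarbleT.finC

/-- The color of the marble at position `m`, for a stack `π` of dropped marbles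
(topmost first, positions strictly increasing from the top and all ≥ the head
position). -/
def marbleAt {C : Type} (m : ℕ) : List (C × ℕ) → Option C
  | [] => none
  | (c, p) :: _ => if p = m then some c else none

/-- `MarbleT.Steps T w c v c'`: on input `⊢w⊣` the marble transducer can go from
configuration `c` to configuration `c'` producing output `v`. A configuration is a
triple (state, head position, stack of dropped marbles). -/
inductive MarbleT.Steps {A B : Type} (T : MarbleT A B) (w : List A) :
    T.Q × ℕ × List (T.C × ℕ) → List B → T.Q × ℕ × List (T.C × ℕ) → Prop
  | refl (c : T.Q × ℕ × List (T.C × ℕ)) : MarbleT.Steps T w c [] c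
  | stepL {q : T.Q} {m : ℕ} {π : List (T.C × ℕ)} {q' : T.Q} {v u : List B}
      {cf : T.Q × ℕ × List (T.C × ℕ)} :
      T.trans q (tapeAt w m) (marbleAt m π) = some ((q', MAct.left), v) → 1 ≤ m →
      MarbleT.Steps T w (q', m - 1, π) u cf → MarbleT.Steps T w (q, m, π) (v ++ u) cf
  | stepR {q : T.Q} {m : ℕ} {π : List (T.C × ℕ)} {q' : T.Q} {v u : List B}
      {cf : T.Q × ℕ × List (T.C × ℕ)} :
      marbleAt m π = none →
      T.trans q (tapeAt w m) none = some ((q', MAct.right), v) → m ≤ w.length →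
      MarbleT.Steps T w (q', m + 1, π) u cf → MarbleT.Steps T w (q, m, π) (v ++ u) cf
  | stepLift {q : T.Q} {m : ℕ} {π : List (T.C × ℕ)} {q' : T.Q} {cc : T.C} {v u : List B}
      {cf : T.Q × ℕ × List (T.C × ℕ)} :
      T.trans q (tapeAt w m) (some cc) = some ((q', MAct.lift), v) →
      MarbleT.Steps T w (q', m, π) u cf →
      MarbleT.Steps T w (q, m, (cc, m) :: π) (v ++ u) cf
  | stepDrop {q : T.Q} {m : ℕ} {π : List (T.C × ℕ)} {q' : T.Q} {cc : T.C} {v u : List B}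
      {cf : T.Q × ℕ × List (T.C × ℕ)} :
      marbleAt m π = none →
      T.trans q (tapeAt w m) none = some ((q', MAct.drop cc), v) →
      MarbleT.Steps T w (q', m, (cc, m) :: π) u cf →
      MarbleT.Steps T w (q, m, π) (v ++ u) cf

/-- The marble transducer computes the partial function `f`: `f w = some v` iff there is
an accepting run on `⊢w⊣` (from `(q0, 0, ε)` to `(q, |w|+1, ε)` with `q` final)
producing `v`. -/
def MarbleT.Computes {A B : Type} (T : MarbleT A B) (f : List A → Option (List B)) : Prop :=
  ∀ w v, f w = some v ↔
    ∃ q ∈ T.final, MarbleT.Steps T w (T.q0, 0, []) v (q, w.length + 1, [])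

/-- A `k`-marble transducer: every configuration reachable from the initial
configuration carries at most `k` marbles. -/
def MarbleT.IsKMarble {A B : Type} (T : MarbleT A B) (k : ℕ) : Prop :=
  ∀ (w : List A) (u : List B) (cfg : T.Q × ℕ × List (T.C × ℕ)),
    MarbleT.Steps T w (T.q0, 0, []) u cfg → cfg.2.2.length ≤ k

/-- `f` is computable by a `k`-marble transducer. -/
def ComputableKMarble {A B : Type} (f : List A → List B) (k : ℕ) : Prop :=
  ∃ T : MarbleT A B, T.IsKMarble k ∧ T.Computes (fun w => some (f w))

/-! ### Matrices over ℕ and ℕ-automata -/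

/-- Product of two square matrices over `ℕ` (given as functions). -/
def matMul {Q : Type} [Fintype Q] (M N : Q → Q → ℕ) : Q → Q → ℕ :=
  fun i j => ∑ x : Q, M i x * N x j

/-- Identity matrix over `ℕ`. -/
def matId {Q : Type} [DecidableEq Q] : Q → Q → ℕ :=
  fun i j => if i = j then 1 else 0

/-- Row vector times matrix. -/
def vecMat {Q : Type} [Fintype Q] (v : Q → ℕ) (M : Q → Q → ℕ) : Q → ℕ :=
  fun j => ∑ x : Q, v x * M x j

/-- Matrix times column vector. -/
def matVec {Q : Type} [Fintype Q] (M : Q → Q → ℕ) (v : Q → ℕ) : Q → ℕ :=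
  fun i => ∑ x : Q, M i x * v x

/-- Dot product of two vectors over `ℕ`. -/
def dotProd {Q : Type} [Fintype Q] (v w : Q → ℕ) : ℕ :=
  ∑ x : Q, v x * w x

/-- An `ℕ`-automaton: a finite set of states `Q`, an initial row vector `α`, a weight
matrix `μ a` for every letter `a` (extended to words as a monoid morphism `μW`), and a
final column vector `β`. -/
structure NAut (A : Type) where
  Q : Type
  [finQ : Fintype Q]
  [decQ : DecidableEq Q]
  α : Q → ℕ
  μ : A → Q → Q → ℕ
  β : Q → ℕ

attribute [instance] NAut.finQ NAut.decQ

/-- The monoid morphism `A* → ℕ^{Q×Q}` extending `μ`. -/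
def NAut.μW {A : Type} (T : NAut A) : List A → T.Q → T.Q → ℕ
  | [] => matId
  | a :: w => matMul (T.μ a) (T.μW w)

/-- The total function `g : A* → ℕ` computed by the `ℕ`-automaton: `g w = α·μ(w)·β`. -/
def NAut.g {A : Type} (T : NAut A) (w : List A) : ℕ :=
  dotProd (vecMat T.α (T.μW w)) T.β

/-- Trimness: every state is accessible and co-accessible with nonzero weight. -/
def NAut.Trim {A : Type} (T : NAut A) : Prop :=
  ∀ q : T.Q, (∃ u, 1 ≤ vecMat T.α (T.μW u) q) ∧ (∃ v, 1 ≤ matVec (T.μW v) T.β q)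

/-- A heavy cycle on state `q`: a nonempty word `v` with `μ(v)(q,q) ≥ 2`. -/
def NAut.HeavyCycle {A : Type} (T : NAut A) (q : T.Q) (v : List A) : Prop :=
  v ≠ [] ∧ 2 ≤ T.μW v q q

/-- A barbell from `q` to `q' ≠ q`: a nonempty word `v` with `μ(v)(q,q) ≥ 1`,
`μ(v)(q,q') ≥ 1` and `μ(v)(q',q') ≥ 1`. -/
def NAut.Barbell {A : Type} (T : NAut A) (q q' : T.Q) (v : List A) : Prop :=
  q ≠ q' ∧ v ≠ [] ∧ 1 ≤ T.μW v q q ∧ 1 ≤ T.μW v q q' ∧ 1 ≤ T.μW v q' q'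

/-- Edge of the barbell graph `𝔊`. -/
def NAut.GEdge {A : Type} (T : NAut A) (q1 q2 : T.Q) : Prop :=
  ∃ q q' v, T.Barbell q q' v ∧ (∃ w, 1 ≤ T.μW w q1 q) ∧ (∃ w', 1 ≤ T.μW w' q' q2)

/-- `PathLen G q n`: there is a directed path of length `n` (counting edges) in the
graph `G` ending in `q`. -/
inductive PathLen {Q : Type} (G : Q → Q → Prop) : Q → ℕ → Prop
  | zero (q : Q) : PathLen G q 0
  | succ {p q : Q} {n : ℕ} : PathLen G p n → G p q → PathLen G q (n + 1)

/-- The height of `q` in the graph `G` is `n`: the maximal length of a directed path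
ending in `q` is `n`. -/
def HeightIs {Q : Type} (G : Q → Q → Prop) (q : Q) (n : ℕ) : Prop :=
  PathLen G q n ∧ ∀ m, PathLen G q m → m ≤ n

/-! ### Statement-specific predicates -/

/-- Case (1) of the trichotomy: `|f|` has exponential growth and `f` is not computable
with `k` marbles for any `k`. -/
def MarbleCase1 {A B : Type} (f : List A → List B) : Prop :=
  ExpGrowth (fun w => (f w).length) ∧ ∀ k : ℕ, ¬ ComputableKMarble f k

/-- Case (2) of the trichotomy: `|f|` has `(k+1)`-polynomial growth for some `k`, `f` is
computable with `k` marbles, and `k` is the least possible number of marbles. -/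
def MarbleCase2 {A B : Type} (f : List A → List B) : Prop :=
  ∃ k : ℕ, PolyGrowth (fun w => (f w).length) (k + 1) ∧ ComputableKMarble f k ∧
    ∀ j : ℕ, ComputableKMarble f j → k ≤ j

/-- Case (3) of the trichotomy: `|f|` has `0`-polynomial growth and `f` is computable
with `0` marbles. -/
def MarbleCase3 {A B : Type} (f : List A → List B) : Prop :=
  PolyGrowth (fun w => (f w).length) 0 ∧ ComputableKMarble f 0

/-- The second alternative of Lemma `lem:graph`: `g` has `k`-polynomial growth for some
`k ≥ 0` and the states admit a partition `S_0, …, S_k` satisfying (a), (b), (c). -/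
def NAutPolyCase {A : Type} (T : NAut A) : Prop :=
  ∃ k : ℕ, PolyGrowth T.g k ∧
    ∃ S : T.Q → Fin (k + 1),
      (∀ q q' : T.Q, (∃ w, 1 ≤ T.μW w q q') → S q ≤ S q') ∧
      (∃ Bd : ℕ, ∀ q q' : T.Q, S q = S q' → ∀ w, T.μW w q q' ≤ Bd) ∧
      (∀ q : T.Q, ∃ C : ℕ, ∀ w, vecMat T.α (T.μW w) q ≤ C * w.length ^ (S q : ℕ) + C)

/-! Trimness provides words `u`, `w` with `(α·μ(u))(q) ≥ 1` and `(μ(w)·β)(q) ≥ 1`. Since `μ` is a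
morphism into matrices with entries in `ℕ`, `μ(v^ℓ)(q,q) ≥ μ(v)(q,q)^ℓ ≥ 2^ℓ`, hence
`g(u v^ℓ w) ≥ 2^ℓ`. Conversely every entry of `μ(w)` is at most `K^|w|`, where `K` bounds the
row sums of the letter matrices, so `g(w) = 2^{O(|w|)}`. -/

open Matrix

section CanonicallyOrdered

variable {n R : Type} [Fintype n] [CommSemiring R] [PartialOrder R] [CanonicallyOrderedAdd R]

theorem Matrix.mul_apply_le_mul_apply (M N : Matrix n n R) (i j k : n) :
    M i j * N j k ≤ (M * N) i k := by
  rw [Matrix.mul_apply]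
  exact Finset.single_le_sum (f := fun x => M i x * N x k) (fun _ _ => zero_le)
    (Finset.mem_univ j)

theorem Matrix.apply_pow_le_pow_apply [DecidableEq n] (M : Matrix n n R) (i : n) (m : ℕ) :
    M i i ^ m ≤ (M ^ m) i i := by
  induction m with
  | zero => simp
  | succ m ih =>
    calc M i i ^ (m + 1) = M i i ^ m * M i i := pow_succ _ _
      _ ≤ (M ^ m) i i * M i i := by gcongr
      _ ≤ (M ^ (m + 1)) i i := by
        rw [pow_succ]; exact Matrix.mul_apply_le_mul_apply _ _ i i i

theorem Matrix.mul_apply_mul_le_vecMul_dotProduct (x y : n → R) (M : Matrix n n R) (i : n) :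
    x i * M i i * y i ≤ x ᵥ* M ⬝ᵥ y := by
  have hx : x i * M i i ≤ (x ᵥ* M) i :=
    Finset.single_le_sum (f := fun j => x j * M j i) (fun _ _ => zero_le) (Finset.mem_univ i)
  calc x i * M i i * y i ≤ (x ᵥ* M) i * y i := by gcongr
    _ ≤ x ᵥ* M ⬝ᵥ y :=
      Finset.single_le_sum (f := fun j => (x ᵥ* M) j * y j) (fun _ _ => zero_le)
        (Finset.mem_univ i)

end CanonicallyOrdered

namespace NAut

variable {A : Type} (T : NAut A)

theorem of_μW (w : List A) : of (T.μW w) = (w.map fun a => of (T.μ a)).prod := by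
  induction w with
  | nil => ext i j; simp [μW, matId, Matrix.one_apply]
  | cons a w ih => rw [List.map_cons, List.prod_cons, ← ih]; rfl

theorem g_eq_vecMul_dotProduct (w : List A) : T.g w = T.α ᵥ* of (T.μW w) ⬝ᵥ T.β := rfl

theorem of_μW_append (x y : List A) :
    of (T.μW (x ++ y)) = of (T.μW x) * of (T.μW y) := by
  simp only [of_μW, List.map_append, List.prod_append]

theorem of_μW_flatten_replicate (v : List A) (ℓ : ℕ) :
    of (T.μW (List.replicate ℓ v).flatten) = of (T.μW v) ^ ℓ := by
  induction ℓ with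
  | zero => simp [of_μW]
  | succ ℓ ih => rw [List.replicate_succ, List.flatten_cons, of_μW_append, ih, pow_succ']

theorem g_append_ge (u m w : List A) (q : T.Q) :
    (T.α ᵥ* of (T.μW u)) q * T.μW m q q * (of (T.μW w) *ᵥ T.β) q ≤ T.g (u ++ m ++ w) := by
  rw [g_eq_vecMul_dotProduct, of_μW_append, of_μW_append, ← vecMul_vecMul, ← dotProduct_mulVec,
    ← vecMul_vecMul]
  exact Matrix.mul_apply_mul_le_vecMul_dotProduct _ _ (of (T.μW m)) q

theorem μW_apply_le_pow {K : ℕ} (hK : ∀ a i, ∑ j, T.μ a i j ≤ K) (w : List A) (i j : T.Q) :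
    T.μW w i j ≤ K ^ w.length := by
  induction w generalizing i with
  | nil => simp only [μW, matId]; split <;> simp
  | cons a w ih =>
    calc T.μW (a :: w) i j = ∑ x, T.μ a i x * T.μW w x j := rfl
      _ ≤ ∑ x, T.μ a i x * K ^ w.length := by gcongr with x; exact ih x
      _ ≤ K * K ^ w.length := by rw [← Finset.sum_mul]; gcongr; exact hK a i
      _ = K ^ (a :: w).length := by rw [List.length_cons, pow_succ']

theorem g_le_two_pow [Fintype A] : ∃ C, ∀ w, T.g w ≤ 2 ^ (C * w.length + C) := by
  set K := ∑ a, ∑ i, ∑ j, T.μ a i j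
  have hK : ∀ a i, ∑ j, T.μ a i j ≤ K := fun a i =>
    (Finset.single_le_sum (f := fun i => ∑ j, T.μ a i j) (fun _ _ => zero_le)
      (Finset.mem_univ i)).trans
    (Finset.single_le_sum (f := fun a => ∑ i, ∑ j, T.μ a i j) (fun _ _ => zero_le)
      (Finset.mem_univ a))
  set D := (∑ i, T.α i) * ∑ j, T.β j
  refine ⟨K + D, fun w => ?_⟩
  have h2pow : ∀ n ≤ K + D, n ≤ 2 ^ (K + D) := fun n hn =>
    Nat.lt_two_pow_self.le.trans (Nat.pow_le_pow_right two_pos hn)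
  calc T.g w = ∑ j, (∑ i, T.α i * T.μW w i j) * T.β j := rfl
    _ ≤ ∑ j, (∑ i, T.α i * K ^ w.length) * T.β j := by
      gcongr with j _ i; exact T.μW_apply_le_pow hK w i j
    _ = (K ^ w.length) * D := by
      simp only [D, ← Finset.sum_mul, ← Finset.mul_sum]; ring
    _ ≤ (2 ^ (K + D)) ^ w.length * 2 ^ (K + D) := by
      gcongr <;> exact h2pow _ (by omega)
    _ = 2 ^ ((K + D) * w.length + (K + D)) := by rw [← pow_mul, ← pow_add]

theorem two_pow_le_g_of_heavyCycle (hT : T.Trim) {q : T.Q} {v : List A}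
    (hv : T.HeavyCycle q v) :
    ∃ u w, ∀ ℓ : ℕ, 2 ^ ℓ ≤ T.g (u ++ (List.replicate ℓ v).flatten ++ w) := by
  obtain ⟨⟨u, hu⟩, w, hw⟩ := hT q
  refine ⟨u, w, fun ℓ => ?_⟩
  have hpow : 2 ^ ℓ ≤ T.μW (List.replicate ℓ v).flatten q q := by
    rw [← of_apply (T.μW _), of_μW_flatten_replicate]
    exact (Nat.pow_le_pow_left hv.2 ℓ).trans (Matrix.apply_pow_le_pow_apply _ q ℓ)
  calc 2 ^ ℓ = 1 * 2 ^ ℓ * 1 := by ring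
    _ ≤ (T.α ᵥ* of (T.μW u)) q * T.μW (List.replicate ℓ v).flatten q q
          * (of (T.μW w) *ᵥ T.β) q := Nat.mul_le_mul (Nat.mul_le_mul hu hpow) hw
    _ ≤ _ := T.g_append_ge u _ w q

end NAut

theorem expGrowth_of_pumping {A : Type} {g : List A → ℕ}
    (hg : ∃ C, ∀ w, g w ≤ 2 ^ (C * w.length + C)) {u v w : List A} (hv : v ≠ [])
    (hpump : ∀ ℓ : ℕ, 2 ^ ℓ ≤ g (u ++ (List.replicate ℓ v).flatten ++ w)) :
    ExpGrowth g := by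
  have hlen : ∀ ℓ, (u ++ (List.replicate ℓ v).flatten ++ w).length
      = u.length + ℓ * v.length + w.length := by
    intro ℓ; simp [Nat.add_assoc]
  have hv_pos : 0 < v.length := List.length_pos_iff.mpr hv
  refine ⟨hg, Set.range fun ℓ => u ++ (List.replicate (ℓ + 1) v).flatten ++ w, ?_,
    u.length + v.length + w.length, by omega, ?_⟩
  · refine Set.infinite_range_of_injective fun ℓ ℓ' h => ?_
    have hlen_eq := congrArg List.length h
    rw [hlen, hlen] at hlen_eq
    have := Nat.eq_of_mul_eq_mul_right hv_pos
      (by omega : (ℓ + 1) * v.length = (ℓ' + 1) * v.length)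
    omega
  · rintro _ ⟨ℓ, rfl⟩
    calc 2 ^ (u ++ (List.replicate (ℓ + 1) v).flatten ++ w).length
        ≤ 2 ^ ((ℓ + 1) * (u.length + v.length + w.length)) := by
          rw [hlen]; exact Nat.pow_le_pow_right two_pos (by nlinarith)
      _ = (2 ^ (ℓ + 1)) ^ (u.length + v.length + w.length) := pow_mul _ _ _
      _ ≤ _ := Nat.pow_le_pow_left (hpump (ℓ + 1)) _

theorem stmt9 {A : Type} [Fintype A] (T : NAut A) (hT : T.Trim)
    (h : ∃ q v, T.HeavyCycle q v) :
    ExpGrowth T.g ∧ ∃ u v w', v ≠ [] ∧ ∀ ℓ : ℕ,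
      2 ^ ℓ ≤ T.g (u ++ (List.replicate ℓ v).flatten ++ w') := by
  obtain ⟨q, v, hv⟩ := h
  obtain ⟨u, w, hpump⟩ := T.two_pow_le_g_of_heavyCycle hT hv
  exact ⟨expGrowth_of_pumping T.g_le_two_pow hv.1 hpump, u, v, w, hv.1, hpump⟩
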